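/- arXiv:1511.02033 — 14 statements merged into one kernel-verified Lean document; each statement's English description precedes it below -/
import Mathlib

section
/- Suppose (d_k,...,d_0) is a tuple of base-b digits and (c_k,...,c_0) is a tuple of base-n digits with c_0 = 0, and b·c_{j+1} − c_j = n·d_{σ(j)} − d_j holds for all 0 ≤ j ≤ k (with c_{k+1} interpreted as 0). Then (d_k,...,d_0)_b is an (n,b,σ)-permutiple, i.e., Σ_{j=0}^k d_j b^j = n·Σ_{j=0}^k d_{σ(j)} b^j. -/
/-- Theorem 3 (converse of fund), first part: if the digit-carry relations hold
for base-b digits d and base-n carries c with c_0 = 0 (and c_{k+1} = 0), then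
(d_k,...,d_0)_b is an (n,b,σ)-permutiple. -/
theorem stmt_2 (n b k : ℕ) (hn : 1 < n) (hnb : n < b)
    (σ : Equiv.Perm (Fin (k + 1))) (d : Fin (k + 1) → ℕ) (hd : ∀ j, d j < b)
    (c : ℕ → ℕ) (hc : ∀ j : ℕ, j ≤ k → c j < n) (hc0 : c 0 = 0)
    (hck1 : c (k + 1) = 0)
    (hrel : ∀ j : Fin (k + 1),
      (b : ℤ) * c ((j : ℕ) + 1) - c (j : ℕ) = n * d (σ j) - d j) :
    ∑ j : Fin (k + 1), d j * b ^ (j : ℕ)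
      = n * ∑ j : Fin (k + 1), d (σ j) * b ^ (j : ℕ) := by
  have key : (∑ j : Fin (k+1), ((n:ℤ) * d (σ j) - d j) * (b:ℤ) ^ (j:ℕ)) = 0 := by
    have h1 : ∀ j : Fin (k+1), ((n:ℤ) * d (σ j) - d j) * (b:ℤ) ^ (j:ℕ)
        = ((c ((j:ℕ)+1) : ℤ) * (b:ℤ) ^ ((j:ℕ)+1) - (c (j:ℕ) : ℤ) * (b:ℤ) ^ (j:ℕ)) := by
      intro j
      rw [← hrel j]; ring
    rw [Finset.sum_congr rfl (fun j _ => h1 j),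
      Fin.sum_univ_eq_sum_range (fun i => (c (i+1) : ℤ) * (b:ℤ)^(i+1) - (c i : ℤ) * (b:ℤ)^i),
      Finset.sum_range_sub (fun i => (c i : ℤ) * (b:ℤ)^i)]
    simp [hck1, hc0]
  have h2 : ((∑ j : Fin (k+1), (d j : ℤ) * (b:ℤ) ^ (j:ℕ)))
      = (n:ℤ) * ∑ j : Fin (k+1), (d (σ j) : ℤ) * (b:ℤ) ^ (j:ℕ) := by
    have := key
    simp only [sub_mul, Finset.sum_sub_distrib, mul_assoc, ← Finset.mul_sum] at this
    linarith
  exact_mod_cast h2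
end

section
/- For an (n,b,σ)-permutiple with carries c_j, each digit is determined by the carries via d_j = (1/(n^m − 1)) · Σ_{ℓ=0}^{m−1} (b·c_{ψσ^ℓ(j)} − c_{σ^ℓ(j)})·n^ℓ, where m is the order of σ and ψ is the (k+1)-cycle (0,1,2,...,k) acting on indices, so that c_{ψ(i)} means c_{i+1 mod k+1}, with c_0 = 0 (so that c_{k+1} = c_0 = 0). -/
/-- Theorem 4, first formula: the digits of an (n,b,σ)-permutiple are determined
by the carries via (n^m − 1)·d_j = Σ_{ℓ=0}^{m−1} (b·c_{ψσ^ℓ(j)} − c_{σ^ℓ(j)})·n^ℓ,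
where m = |σ| and ψ is the (k+1)-cycle j ↦ j+1 mod (k+1). -/
theorem stmt_4 (n b k : ℕ) (hn : 1 < n) (hnb : n < b)
    (σ : Equiv.Perm (Fin (k + 1))) (d : Fin (k + 1) → ℕ) (hd : ∀ j, d j < b)
    (c : Fin (k + 1) → ℕ) (hc0 : c 0 = 0) (hcb : ∀ j, c j ≤ n - 1)
    (hrel : ∀ j : Fin (k + 1), (b : ℤ) * c (j + 1) - c j = n * d (σ j) - d j) :
    ∀ j : Fin (k + 1),
      ((n : ℤ) ^ orderOf σ - 1) * d j
        = ∑ ℓ ∈ Finset.range (orderOf σ),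
            ((b : ℤ) * c ((σ ^ ℓ) j + 1) - c ((σ ^ ℓ) j)) * n ^ ℓ := by
  intro j
  have h : ∀ ℓ, ((b : ℤ) * c ((σ ^ ℓ) j + 1) - c ((σ ^ ℓ) j)) * n ^ ℓ
      = (n : ℤ) ^ (ℓ + 1) * d ((σ ^ (ℓ + 1)) j) - n ^ ℓ * d ((σ ^ ℓ) j) := by
    intro ℓ
    rw [hrel ((σ ^ ℓ) j)]
    have hs : (σ ^ (ℓ + 1)) j = σ ((σ ^ ℓ) j) := by rw [pow_succ', Equiv.Perm.mul_apply]
    rw [hs]; ring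
  simp only [h]
  rw [Finset.sum_range_sub (f := fun ℓ => (n : ℤ) ^ ℓ * d ((σ ^ ℓ) j))]
  have hσ : (σ ^ orderOf σ) j = j := by rw [pow_orderOf_eq_one]; rfl
  rw [hσ]; simp; ring
end

section
/- For an (n,b,σ)-permutiple with carries c_j, each carry is determined by the digits via c_j = (1/(b^{k+1} − 1)) · Σ_{ℓ=0}^{k} (n·d_{σψ^ℓ(j)} − d_{ψ^ℓ(j)})·b^ℓ, where ψ is the (k+1)-cycle (0,1,...,k) acting mod k+1. -/
open Fin.NatCast

/-- The sum telescopes because `j + (k + 1) = j` in `Fin (k + 1)`. -/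
theorem Fin.geom_sum_mul_cyclic_sub {R : Type*} [CommRing R] {k : ℕ} (b : R)
    (c : Fin (k + 1) → R) (j : Fin (k + 1)) :
    ∑ ℓ ∈ Finset.range (k + 1),
        (b * c (j + (ℓ : Fin (k + 1)) + 1) - c (j + (ℓ : Fin (k + 1)))) * b ^ ℓ
      = (b ^ (k + 1) - 1) * c j := by
  have hterm : ∀ ℓ : ℕ,
      (b * c (j + (ℓ : Fin (k + 1)) + 1) - c (j + (ℓ : Fin (k + 1)))) * b ^ ℓ
        = b ^ (ℓ + 1) * c (j + ((ℓ + 1 : ℕ) : Fin (k + 1)))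
            - b ^ ℓ * c (j + (ℓ : Fin (k + 1))) := by
    intro ℓ
    rw [Nat.cast_succ, ← add_assoc]
    ring
  rw [Finset.sum_congr rfl fun ℓ _ => hterm ℓ,
    Finset.sum_range_sub (fun ℓ => b ^ ℓ * c (j + (ℓ : Fin (k + 1)))), Fin.natCast_self,
    Nat.cast_zero, add_zero, pow_zero, one_mul, sub_mul, one_mul]

theorem stmt_5_general (n b k : ℕ)
    (σ : Equiv.Perm (Fin (k + 1))) (d : Fin (k + 1) → ℕ)
    (c : Fin (k + 1) → ℕ)
    (hrel : ∀ j : Fin (k + 1), (b : ℤ) * c (j + 1) - c j = n * d (σ j) - d j) :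
    ∀ j : Fin (k + 1),
      ((b : ℤ) ^ (k + 1) - 1) * c j
        = ∑ ℓ ∈ Finset.range (k + 1),
            ((n : ℤ) * d (σ (j + (ℓ : Fin (k + 1)))) - d (j + (ℓ : Fin (k + 1))))
              * b ^ ℓ := by
  intro j
  rw [← Fin.geom_sum_mul_cyclic_sub (b : ℤ) (fun i => (c i : ℤ)) j]
  exact Finset.sum_congr rfl fun ℓ _ => by rw [hrel]

/-- Theorem 4, second formula: the carries of an (n,b,σ)-permutiple are determined
by the digits via (b^{k+1} − 1)·c_j = Σ_{ℓ=0}^{k} (n·d_{σψ^ℓ(j)} − d_{ψ^ℓ(j)})·b^ℓ,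
where ψ is the (k+1)-cycle j ↦ j+1 mod (k+1). -/
theorem stmt_5 (n b k : ℕ) (hn : 1 < n) (hnb : n < b)
    (σ : Equiv.Perm (Fin (k + 1))) (d : Fin (k + 1) → ℕ) (hd : ∀ j, d j < b)
    (c : Fin (k + 1) → ℕ) (hc0 : c 0 = 0) (hcb : ∀ j, c j ≤ n - 1)
    (hrel : ∀ j : Fin (k + 1), (b : ℤ) * c (j + 1) - c j = n * d (σ j) - d j) :
    ∀ j : Fin (k + 1),
      ((b : ℤ) ^ (k + 1) - 1) * c j
        = ∑ ℓ ∈ Finset.range (k + 1),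
            ((n : ℤ) * d (σ (j + (ℓ : Fin (k + 1)))) - d (j + (ℓ : Fin (k + 1))))
              * b ^ ℓ :=
  stmt_5_general n b k σ d c hrel
end

section
/- Let (d_k,...,d_0)_b be an (n,b,σ)-permutiple with carries c_k,...,c_0, and let μ be a permutation of {0,...,k} with c_{μ(0)} = 0. Then (d_{π(k)},...,d_{π(0)})_b is an (n,b,π^{-1}σπ)-permutiple with carries c_{μ(k)},...,c_{μ(0)} if and only if P_π(bP_ψ − I)c = (bP_ψ − I)P_μ c, i.e., applying π to the vector with j-th entry b·c_{ψ(j)} − c_j equals applying (bP_ψ − I) to the μ-permuted carry vector. -/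
/-- Theorem 6 (new_perm): let (d_k,...,d_0)_b be an (n,b,σ)-permutiple with
carries c, and μ a permutation with c_{μ(0)} = 0. Then (d_{π(k)},...,d_{π(0)})_b
is an (n,b,π⁻¹σπ)-permutiple with carries c_{μ(k)},...,c_{μ(0)} if and only if
P_π(bP_ψ − I)c = (bP_ψ − I)P_μ c (componentwise, with ψ : j ↦ j+1 mod (k+1)). -/
theorem stmt_7 (n b k : ℕ) (hn : 1 < n) (hnb : n < b)
    (σ π μ : Equiv.Perm (Fin (k + 1))) (d : Fin (k + 1) → ℕ) (hd : ∀ j, d j < b)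
    (c : Fin (k + 1) → ℕ) (hc0 : c 0 = 0) (hcb : ∀ j, c j ≤ n - 1)
    (hrel : ∀ j : Fin (k + 1), (b : ℤ) * c (j + 1) - c j = n * d (σ j) - d j)
    (hμ0 : c (μ 0) = 0) :
    (∀ j : Fin (k + 1),
        (b : ℤ) * c (μ (j + 1)) - c (μ j)
          = n * d (π ((π⁻¹ * σ * π) j)) - d (π j))
      ↔ (∀ j : Fin (k + 1),
        (b : ℤ) * c (π j + 1) - c (π j)
          = (b : ℤ) * c (μ (j + 1)) - c (μ j)) := by
  have key : ∀ j : Fin (k + 1),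
      (n : ℤ) * d (π ((π⁻¹ * σ * π) j)) - d (π j)
        = (b : ℤ) * c (π j + 1) - c (π j) := by
    intro j
    have h := hrel (π j)
    simpa [Equiv.Perm.mul_apply] using h.symm
  constructor
  · intro h j
    rw [← key j, h j]
  · intro h j
    rw [key j, ← h j]
end

section
/- Let (d_k,...,d_0)_b be an (n,b,σ)-permutiple with carries c_k,...,c_0. If c_j = 0 for some j, then (d_{ψ^j(k)}, ..., d_{ψ^j(0)})_b is an (n,b,ψ^{-j}σψ^j)-permutiple with carries c_{ψ^j(k)},...,c_{ψ^j(0)}. -/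
/-- Corollary (zero_carry): if (d_k,...,d_0)_b is an (n,b,σ)-permutiple with
carries c and c_{j₀} = 0, then (d_{ψ^{j₀}(k)},...,d_{ψ^{j₀}(0)})_b is an
(n,b,ψ^{-j₀}σψ^{j₀})-permutiple with carries c_{ψ^{j₀}(i)}, where
ψ : i ↦ i+1 mod (k+1) (so ψ^{j₀}(i) = i + j₀). -/
theorem stmt_8 (n b k : ℕ) (hn : 1 < n) (hnb : n < b)
    (σ : Equiv.Perm (Fin (k + 1))) (d : Fin (k + 1) → ℕ) (hd : ∀ j, d j < b)
    (c : Fin (k + 1) → ℕ) (hc0 : c 0 = 0) (hcb : ∀ j, c j ≤ n - 1)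
    (hrel : ∀ j : Fin (k + 1), (b : ℤ) * c (j + 1) - c j = n * d (σ j) - d j)
    (j₀ : Fin (k + 1)) (hj₀ : c j₀ = 0) :
    (∑ i : Fin (k + 1), d (i + j₀) * b ^ (i : ℕ)
        = n * ∑ i : Fin (k + 1), d (σ (i + j₀)) * b ^ (i : ℕ))
      ∧ ∀ i : Fin (k + 1),
        (b : ℤ) * c ((i + 1) + j₀) - c (i + j₀)
          = n * d (σ (i + j₀)) - d (i + j₀) := by
  have key : ∀ i : Fin (k + 1),
      (b : ℤ) * c ((i + 1) + j₀) - c (i + j₀)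
        = n * d (σ (i + j₀)) - d (i + j₀) := by
    intro i
    have := hrel (i + j₀)
    rwa [add_right_comm i j₀ 1] at this
  refine ⟨?_, key⟩
  set f : Fin (k + 1) → ℤ := fun i => (b : ℤ) ^ (i : ℕ) * c (i + j₀) with hf
  have hstep : ∀ i : Fin (k + 1),
      (b : ℤ) ^ ((i : ℕ) + 1) * (c ((i + 1) + j₀) : ℤ) = f (i + 1) := by
    intro i
    rcases eq_or_lt_of_le (Fin.le_last i) with h | h
    · have h1 : i + 1 = 0 := by
        rw [h]; exact Fin.last_add_one k
      rw [h1]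
      simp [hf, hj₀]
    · have hv : ((i + 1 : Fin (k + 1)) : ℕ) = (i : ℕ) + 1 :=
        Fin.val_add_one_of_lt h
      simp [hf, hv]
  have hre : ∑ i : Fin (k + 1), (b : ℤ) ^ ((i : ℕ) + 1) * (c ((i + 1) + j₀) : ℤ)
      = ∑ i : Fin (k + 1), f i := by
    rw [Finset.sum_congr rfl fun i _ => hstep i]
    exact Fintype.sum_equiv (Equiv.addRight (1 : Fin (k + 1))) _ f (fun i => rfl)
  have hzero : ∑ i : Fin (k + 1),
      ((n : ℤ) * d (σ (i + j₀)) - d (i + j₀)) * (b : ℤ) ^ (i : ℕ) = 0 := by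
    have heq : ∀ i : Fin (k + 1),
        ((n : ℤ) * d (σ (i + j₀)) - d (i + j₀)) * (b : ℤ) ^ (i : ℕ)
          = (b : ℤ) ^ ((i : ℕ) + 1) * (c ((i + 1) + j₀) : ℤ) - f i := by
      intro i
      rw [← key i, hf]
      ring
    rw [Finset.sum_congr rfl fun i _ => heq i, Finset.sum_sub_distrib, hre]
    ring
  have hZ : (↑(∑ i : Fin (k + 1), d (i + j₀) * b ^ (i : ℕ)) : ℤ)
      = (↑(n * ∑ i : Fin (k + 1), d (σ (i + j₀)) * b ^ (i : ℕ)) : ℤ) := by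
    push_cast
    have h1 : ∑ i : Fin (k + 1), (n : ℤ) * d (σ (i + j₀)) * (b : ℤ) ^ (i : ℕ)
        = ∑ i : Fin (k + 1), (d (i + j₀) : ℤ) * (b : ℤ) ^ (i : ℕ) := by
      have := hzero
      simp only [sub_mul] at this
      rw [Finset.sum_sub_distrib] at this
      linarith
    rw [Finset.mul_sum, ← h1]
    refine Finset.sum_congr rfl fun i _ => ?_
    ring
  exact_mod_cast hZ
end

section
/- Let (d_k,...,d_0)_b be an (n,b,σ)-permutiple with carries c. If π is a permutation such that the vector v with entries v_j = b·c_{ψ(j)} − c_j satisfies v_{π^{-1}(j)} = v_j for all j (i.e., P_π fixes (bP_ψ − I)c), then (d_{π(k)},...,d_{π(0)})_b is an (n,b,π^{-1}σπ)-permutiple with the same carries c, and conversely. -/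
/-- Corollary (new_perm_id): let (d_k,...,d_0)_b be an (n,b,σ)-permutiple with
carries c, and let v_j = b·c_{ψ(j)} − c_j. Then (d_{π(k)},...,d_{π(0)})_b is an
(n,b,π⁻¹σπ)-permutiple with the same carries c if and only if P_π fixes the
vector v, i.e. v_{π(j)} = v_j for all j. -/
theorem stmt_9 (n b k : ℕ) (hn : 1 < n) (hnb : n < b)
    (σ π : Equiv.Perm (Fin (k + 1))) (d : Fin (k + 1) → ℕ) (hd : ∀ j, d j < b)
    (c : Fin (k + 1) → ℕ) (hc0 : c 0 = 0) (hcb : ∀ j, c j ≤ n - 1)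
    (hrel : ∀ j : Fin (k + 1), (b : ℤ) * c (j + 1) - c j = n * d (σ j) - d j) :
    (∀ j : Fin (k + 1),
        (b : ℤ) * c (j + 1) - c j = n * d (π ((π⁻¹ * σ * π) j)) - d (π j))
      ↔ (∀ j : Fin (k + 1),
        (b : ℤ) * c (π j + 1) - c (π j) = (b : ℤ) * c (j + 1) - c j) := by
  have key : ∀ j : Fin (k + 1), π ((π⁻¹ * σ * π) j) = σ (π j) := by
    intro j
    simp [Equiv.Perm.mul_apply]
  constructor
  · intro h j
    rw [hrel (π j), ← key j, ← h j]
  · intro h j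
    rw [key j, ← hrel (π j), h j]
end

section
/- Let (d_{π₁(k)},...,d_{π₁(0)})_b and (d_{π₂(k)},...,d_{π₂(0)})_b be (n,b,τ₁)- and (n,b,τ₂)-permutiples with carries c and ĉ respectively. If π₁τ₁π₁^{-1} = π₂τ₂π₂^{-1} (the permutiples are conjugate), then ĉ_j = c_{π₁^{-1}π₂(j)} for all 0 ≤ j ≤ k. -/
/-- Theorem (conj_class_carries): two conjugate permutiples with the same digit
set have the same set of carries: if π₁τ₁π₁⁻¹ = π₂τ₂π₂⁻¹ then
c'_j = c_{π₁⁻¹π₂(j)} for all j. -/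
theorem stmt_10 (n b k : ℕ) (hn : 1 < n) (hnb : n < b)
    (τ₁ τ₂ π₁ π₂ : Equiv.Perm (Fin (k + 1)))
    (d : Fin (k + 1) → ℕ) (hd : ∀ j, d j < b)
    (c c' : Fin (k + 1) → ℕ)
    (hc0 : c 0 = 0) (hcb : ∀ j, c j ≤ n - 1)
    (hc'0 : c' 0 = 0) (hc'b : ∀ j, c' j ≤ n - 1)
    (hrel₁ : ∀ j : Fin (k + 1),
      (b : ℤ) * c (j + 1) - c j = n * d (π₁ (τ₁ j)) - d (π₁ j))
    (hrel₂ : ∀ j : Fin (k + 1),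
      (b : ℤ) * c' (j + 1) - c' j = n * d (π₂ (τ₂ j)) - d (π₂ j))
    (hconj : π₁ * τ₁ * π₁⁻¹ = π₂ * τ₂ * π₂⁻¹) :
    ∀ j : Fin (k + 1), c' j = c ((π₁⁻¹ * π₂) j) := by
  intro j
  set σ : Equiv.Perm (Fin (k + 1)) := π₁⁻¹ * π₂ with hσ
  have h1 := hrel₁ (σ j)
  have h2 := hrel₂ j
  have e2 : π₁ (σ j) = π₂ j := by simp [hσ]
  have e1 : π₁ (τ₁ (σ j)) = π₂ (τ₂ j) := by
    have h := congr_arg (fun p : Equiv.Perm (Fin (k + 1)) => p (π₂ j)) hconj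
    simpa [hσ, Equiv.Perm.mul_apply] using h
  rw [e1, e2] at h1
  have key : (b : ℤ) * c' (j + 1) - c' j = (b : ℤ) * c (σ j + 1) - c (σ j) :=
    h2.trans h1.symm
  have hdvd : (b : ℤ) ∣ ((c' j : ℤ) - c (σ j)) :=
    ⟨(c' (j + 1) : ℤ) - c (σ j + 1), by linear_combination -key⟩
  have hb1 : c' j < b := lt_of_le_of_lt (le_trans (hc'b j) (Nat.sub_le n 1)) hnb
  have hb2 : c (σ j) < b := lt_of_le_of_lt (le_trans (hcb (σ j)) (Nat.sub_le n 1)) hnb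
  have habs : |(c' j : ℤ) - c (σ j)| < b := by
    rw [abs_lt]
    constructor <;> [push_cast; push_cast] <;> omega
  have := Int.eq_zero_of_abs_lt_dvd hdvd habs
  omega
end

section
/- Let p = (d_{π₁(k)},...,d_{π₁(0)})_b be an (n,b,τ₁)-permutiple with carries c. If (d_{π₂(k)},...,d_{π₂(0)})_b is an (n,b,τ₂)-permutiple conjugate to p (i.e., π₁τ₁π₁^{-1} = π₂τ₂π₂^{-1}), then c_{ψπ₁^{-1}π₂(j)} = c_{π₁^{-1}π₂ψ(j)} for all 0 ≤ j ≤ k, i.e., ψ commutes with π₁^{-1}π₂ on the carry vector. -/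
/-- Theorem (psi_commute): if two permutiples with the same digit set are
conjugate, then ψ commutes with π₁⁻¹π₂ on the carry vector:
c_{ψπ₁⁻¹π₂(j)} = c_{π₁⁻¹π₂ψ(j)} for all j. -/
theorem stmt_11 (n b k : ℕ) (hn : 1 < n) (hnb : n < b)
    (τ₁ τ₂ π₁ π₂ : Equiv.Perm (Fin (k + 1)))
    (d : Fin (k + 1) → ℕ) (hd : ∀ j, d j < b)
    (c c' : Fin (k + 1) → ℕ)
    (hc0 : c 0 = 0) (hcb : ∀ j, c j ≤ n - 1)
    (hc'0 : c' 0 = 0) (hc'b : ∀ j, c' j ≤ n - 1)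
    (hrel₁ : ∀ j : Fin (k + 1),
      (b : ℤ) * c (j + 1) - c j = n * d (π₁ (τ₁ j)) - d (π₁ j))
    (hrel₂ : ∀ j : Fin (k + 1),
      (b : ℤ) * c' (j + 1) - c' j = n * d (π₂ (τ₂ j)) - d (π₂ j))
    (hconj : π₁ * τ₁ * π₁⁻¹ = π₂ * τ₂ * π₂⁻¹) :
    ∀ j : Fin (k + 1),
      c ((π₁⁻¹ * π₂) j + 1) = c ((π₁⁻¹ * π₂) (j + 1)) := by
  set σ : Equiv.Perm (Fin (k + 1)) := π₁⁻¹ * π₂ with hσ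
  -- conjugacy on points
  have hpt : ∀ x, π₁ (τ₁ (π₁⁻¹ x)) = π₂ (τ₂ (π₂⁻¹ x)) := by
    intro x
    have := Equiv.ext_iff.mp hconj x
    simpa [Equiv.Perm.mul_apply] using this
  -- key equation
  have hE : ∀ j : Fin (k + 1),
      (b : ℤ) * ((c (σ j + 1) : ℤ) - c' (j + 1)) = (c (σ j) : ℤ) - c' j := by
    intro j
    have h1 := hrel₁ (σ j)
    have h2 := hrel₂ j
    have e1 : π₁ (σ j) = π₂ j := by simp [hσ, Equiv.Perm.mul_apply]
    have e2 : π₁ (τ₁ (σ j)) = π₂ (τ₂ j) := by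
      have : σ j = π₁⁻¹ (π₂ j) := by simp [hσ, Equiv.Perm.mul_apply]
      rw [this, hpt (π₂ j)]
      simp
    rw [e1, e2] at h1
    linarith [h1, h2]
  -- carries agree under σ (shifted)
  have hg : ∀ j : Fin (k + 1), (c (σ j + 1) : ℤ) = c' (j + 1) := by
    intro j
    have h := hE j
    have b1 : c (σ j) ≤ n - 1 := hcb _
    have b2 : c' j ≤ n - 1 := hc'b _
    have b3 : c (σ j + 1) ≤ n - 1 := hcb _
    have b4 : c' (j + 1) ≤ n - 1 := hc'b _
    have hnb' : (n : ℤ) - 1 < b := by push_cast; omega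
    have hb1 : ((n : ℤ) - 1) = ((n - 1 : ℕ) : ℤ) := by
      have : (1:ℕ) ≤ n := by omega
      push_cast [this]
      ring
    have hub : |(c (σ j) : ℤ) - c' j| < b := by
      rw [abs_sub_lt_iff]
      constructor <;>
        [have := b1; have := b2] <;>
        · have h1' : ((c (σ j) : ℕ) : ℤ) ≤ (n : ℤ) - 1 := by
            rw [hb1]; exact_mod_cast b1
          have h2' : ((c' j : ℕ) : ℤ) ≤ (n : ℤ) - 1 := by
            rw [hb1]; exact_mod_cast b2
          have hx : (0:ℤ) ≤ (c (σ j) : ℤ) := Int.ofNat_nonneg _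
          have hy : (0:ℤ) ≤ (c' j : ℤ) := Int.ofNat_nonneg _
          linarith
    have hgabs : (b : ℤ) * |(c (σ j + 1) : ℤ) - c' (j + 1)| < b * 1 := by
      rw [mul_one]
      calc (b : ℤ) * |(c (σ j + 1) : ℤ) - c' (j + 1)|
          = |(b : ℤ) * ((c (σ j + 1) : ℤ) - c' (j + 1))| := by
            rw [abs_mul, abs_of_nonneg (by positivity : (0:ℤ) ≤ (b:ℤ))]
        _ = |(c (σ j) : ℤ) - c' j| := by rw [h]
        _ < b := hub
    have hbpos : (0:ℤ) < b := by exact_mod_cast (by omega : 0 < b)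
    have : |(c (σ j + 1) : ℤ) - c' (j + 1)| < 1 := lt_of_mul_lt_mul_left hgabs (le_of_lt hbpos)
    have := abs_lt.mp this
    omega
  -- hence c ∘ σ = c' everywhere
  have hf : ∀ j : Fin (k + 1), (c (σ j) : ℤ) = c' j := by
    intro j
    have h := hE j
    rw [hg j] at h
    have h0 : (c (σ j) : ℤ) - c' j = 0 := by rw [← h]; ring
    omega
  intro j
  have h1 := hg j
  have h2 := hf (j + 1)
  omega
end

section
/- Let p = (d_{π₁(k)},...,d_{π₁(0)})_b be an (n,b,τ₁)-permutiple with carries c. If π₂ is a permutation with c_{π₁^{-1}π₂(0)} = 0 and c_{ψπ₁^{-1}π₂(j)} = c_{π₁^{-1}π₂ψ(j)} for all 0 ≤ j ≤ k, then (d_{π₂(k)},...,d_{π₂(0)})_b is an (n,b,τ₂)-permutiple with τ₂ = π₂^{-1}π₁τ₁π₁^{-1}π₂, with carries ĉ_j = c_{π₁^{-1}π₂(j)}. -/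
/-- Theorem (psi_commute_2): if π₂ satisfies c_{π₁⁻¹π₂(0)} = 0 and
c_{ψπ₁⁻¹π₂(j)} = c_{π₁⁻¹π₂ψ(j)} for all j, then (d_{π₂(k)},...,d_{π₂(0)})_b is
an (n,b,τ₂)-permutiple with τ₂ = π₂⁻¹π₁τ₁π₁⁻¹π₂ and carries
ĉ_j = c_{π₁⁻¹π₂(j)}. -/
theorem stmt_12 (n b k : ℕ) (hn : 1 < n) (hnb : n < b)
    (τ₁ π₁ π₂ : Equiv.Perm (Fin (k + 1)))
    (d : Fin (k + 1) → ℕ) (hd : ∀ j, d j < b)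
    (c : Fin (k + 1) → ℕ) (hc0 : c 0 = 0) (hcb : ∀ j, c j ≤ n - 1)
    (hrel₁ : ∀ j : Fin (k + 1),
      (b : ℤ) * c (j + 1) - c j = n * d (π₁ (τ₁ j)) - d (π₁ j))
    (h0 : c ((π₁⁻¹ * π₂) 0) = 0)
    (hcomm : ∀ j : Fin (k + 1),
      c ((π₁⁻¹ * π₂) j + 1) = c ((π₁⁻¹ * π₂) (j + 1))) :
    ∀ j : Fin (k + 1),
      (b : ℤ) * c ((π₁⁻¹ * π₂) (j + 1)) - c ((π₁⁻¹ * π₂) j)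
        = n * d (π₂ ((π₂⁻¹ * π₁ * τ₁ * π₁⁻¹ * π₂) j)) - d (π₂ j) := by
  intro j
  have h := hrel₁ ((π₁⁻¹ * π₂) j)
  rw [hcomm j] at h
  simpa [Equiv.Perm.mul_apply] using h
end

section
/- Let (d_k,...,d_0)_b be an (n,b,τ₁)-permutiple with carries c. If π is a permutation with c_{π(0)} = 0 and c_{ψ(j)} = c_{πψπ^{-1}(j)} for all 0 ≤ j ≤ k, then (d_{π(k)},...,d_{π(0)})_b is an (n,b,τ₂)-permutiple with τ₂ = π^{-1}τ₁π, whose carries are ĉ_j = c_{π(j)}. -/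
/-- Corollary (cycle_theorem, part 2): if (d_k,...,d_0)_b is an
(n,b,τ₁)-permutiple with carries c, and π satisfies c_{π(0)} = 0 and
c_{ψ(j)} = c_{πψπ⁻¹(j)} for all j, then (d_{π(k)},...,d_{π(0)})_b is an
(n,b,π⁻¹τ₁π)-permutiple with carries ĉ_j = c_{π(j)}. -/
theorem stmt_13 (n b k : ℕ) (hn : 1 < n) (hnb : n < b)
    (τ₁ π : Equiv.Perm (Fin (k + 1)))
    (d : Fin (k + 1) → ℕ) (hd : ∀ j, d j < b)
    (c : Fin (k + 1) → ℕ) (hc0 : c 0 = 0) (hcb : ∀ j, c j ≤ n - 1)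
    (hrel : ∀ j : Fin (k + 1), (b : ℤ) * c (j + 1) - c j = n * d (τ₁ j) - d j)
    (hπ0 : c (π 0) = 0)
    (hcomm : ∀ j : Fin (k + 1), c (j + 1) = c (π (π⁻¹ j + 1))) :
    ∀ j : Fin (k + 1),
      (b : ℤ) * c (π (j + 1)) - c (π j)
        = n * d (π ((π⁻¹ * τ₁ * π) j)) - d (π j) := by
  intro j
  have h1 := hcomm (π j)
  have h2 := hrel (π j)
  rw [h1] at h2
  simpa [Equiv.Perm.mul_apply] using h2
end

section
/- Let (d_{π₁(k)},...,d_{π₁(0)})_b and (d_{π₂(k)},...,d_{π₂(0)})_b be (n,b,τ₁)- and (n,b,τ₂)-permutiples with carries c and ĉ respectively. If ĉ_j = c_{π₁^{-1}π₂(j)} for all j, then n·d_{π₁τ₁π₁^{-1}(j)} ≡ n·d_{π₂τ₂π₂^{-1}(j)} (mod b) for all 0 ≤ j ≤ k. -/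
/-! Reading the carry relation at `j = π⁻¹ i` gives `n d_{πτπ⁻¹(i)} ≡ d_i - c_{π⁻¹(i)} (mod b)`.
The carry hypothesis says exactly that `c_{π₁⁻¹(i)} = c'_{π₂⁻¹(i)}`, so both sides of the claim are
congruent to the same quantity. -/

theorem mul_digit_conj_modEq_sub_carry {k : ℕ} {n b : ℤ} {τ π : Equiv.Perm (Fin (k + 1))}
    {d c : Fin (k + 1) → ℤ} (hrel : ∀ j, b * c (j + 1) - c j = n * d (π (τ j)) - d (π j))
    (i : Fin (k + 1)) :
    n * d ((π * τ * π⁻¹) i) ≡ d i - c (π⁻¹ i) [ZMOD b] := by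
  have h := hrel (π⁻¹ i)
  simp only [Equiv.Perm.coe_inv, Equiv.apply_symm_apply] at h
  refine (Int.modEq_iff_dvd.mpr ⟨c (π⁻¹ i + 1), ?_⟩).symm
  simp only [Equiv.Perm.mul_apply, Equiv.Perm.coe_inv] at h ⊢
  linarith

theorem stmt_14_general (n b k : ℕ)
    (τ₁ τ₂ π₁ π₂ : Equiv.Perm (Fin (k + 1)))
    (d : Fin (k + 1) → ℕ)
    (c c' : Fin (k + 1) → ℕ)
    (hrel₁ : ∀ j : Fin (k + 1),
      (b : ℤ) * c (j + 1) - c j = n * d (π₁ (τ₁ j)) - d (π₁ j))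
    (hrel₂ : ∀ j : Fin (k + 1),
      (b : ℤ) * c' (j + 1) - c' j = n * d (π₂ (τ₂ j)) - d (π₂ j))
    (hcar : ∀ j : Fin (k + 1), c' j = c ((π₁⁻¹ * π₂) j)) :
    ∀ j : Fin (k + 1),
      ((n : ℤ) * d ((π₁ * τ₁ * π₁⁻¹) j))
        ≡ (n : ℤ) * d ((π₂ * τ₂ * π₂⁻¹) j) [ZMOD b] := by
  intro j
  have h₁ := mul_digit_conj_modEq_sub_carry (d := fun i => (d i : ℤ)) (c := fun i => (c i : ℤ)) hrel₁ j
  have h₂ := mul_digit_conj_modEq_sub_carry (d := fun i => (d i : ℤ)) (c := fun i => (c' i : ℤ)) hrel₂ j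
  have hcarry : c' (π₂⁻¹ j) = c (π₁⁻¹ j) := by
    simp only [hcar, Equiv.Perm.mul_apply, Equiv.Perm.coe_inv, Equiv.apply_symm_apply]
  simp only [hcarry] at h₂
  exact h₁.trans h₂.symm

/-- Theorem: if two permutiples on the same digit set have carries related by
c'_j = c_{π₁⁻¹π₂(j)}, then n·d_{π₁τ₁π₁⁻¹(j)} ≡ n·d_{π₂τ₂π₂⁻¹(j)} (mod b). -/
theorem stmt_14 (n b k : ℕ) (hn : 1 < n) (hnb : n < b)
    (τ₁ τ₂ π₁ π₂ : Equiv.Perm (Fin (k + 1)))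
    (d : Fin (k + 1) → ℕ) (hd : ∀ j, d j < b)
    (c c' : Fin (k + 1) → ℕ)
    (hc0 : c 0 = 0) (hcb : ∀ j, c j ≤ n - 1)
    (hc'0 : c' 0 = 0) (hc'b : ∀ j, c' j ≤ n - 1)
    (hrel₁ : ∀ j : Fin (k + 1),
      (b : ℤ) * c (j + 1) - c j = n * d (π₁ (τ₁ j)) - d (π₁ j))
    (hrel₂ : ∀ j : Fin (k + 1),
      (b : ℤ) * c' (j + 1) - c' j = n * d (π₂ (τ₂ j)) - d (π₂ j))
    (hcar : ∀ j : Fin (k + 1), c' j = c ((π₁⁻¹ * π₂) j)) :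
    ∀ j : Fin (k + 1),
      ((n : ℤ) * d ((π₁ * τ₁ * π₁⁻¹) j))
        ≡ (n : ℤ) * d ((π₂ * τ₂ * π₂⁻¹) j) [ZMOD b] :=
  stmt_14_general n b k τ₁ τ₂ π₁ π₂ d c c' hrel₁ hrel₂ hcar
end

section
/- Let (d_k,...,d_0)_b be an (n,b,σ)-permutiple with carries c, and (d_{π(k)},...,d_{π(0)})_b an (n,b,τ)-permutiple whose carries are exactly c_{π(j)} at position j. Then n·d_{σ(j)} ≡ n·d_{πτπ^{-1}(j)} (mod b) for all 0 ≤ j ≤ k. -/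
theorem Int.modEq_of_mul_sub_eq_sub {b x x' y z a a' : ℤ}
    (h : b * x - y = a - z) (h' : b * x' - y = a' - z) : a ≡ a' [ZMOD b] :=
  Int.modEq_iff_dvd.mpr ⟨x' - x, by linear_combination h - h'⟩

theorem stmt_15_general (n b k : ℕ)
    (σ τ π : Equiv.Perm (Fin (k + 1)))
    (d : Fin (k + 1) → ℕ)
    (c : Fin (k + 1) → ℕ)
    (hrel₁ : ∀ j : Fin (k + 1), (b : ℤ) * c (j + 1) - c j = n * d (σ j) - d j)
    (hrel₂ : ∀ j : Fin (k + 1),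
      (b : ℤ) * c (π (j + 1)) - c (π j) = n * d (π (τ j)) - d (π j)) :
    ∀ j : Fin (k + 1),
      ((n : ℤ) * d (σ j)) ≡ (n : ℤ) * d ((π * τ * π⁻¹) j) [ZMOD b] := by
  intro j
  -- at position π⁻¹ j the second relation has the same incoming carry c_j and digit d_j
  have h₂ := hrel₂ (π⁻¹ j)
  rw [Equiv.Perm.coe_inv, Equiv.apply_symm_apply] at h₂
  exact Int.modEq_of_mul_sub_eq_sub (hrel₁ j) h₂

/-- Corollary (base_perm): if (d_k,...,d_0)_b is an (n,b,σ)-permutiple with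
carries c, and (d_{π(k)},...,d_{π(0)})_b is an (n,b,τ)-permutiple with carries
c_{π(j)}, then n·d_{σ(j)} ≡ n·d_{πτπ⁻¹(j)} (mod b) for all j. -/
theorem stmt_15 (n b k : ℕ) (hn : 1 < n) (hnb : n < b)
    (σ τ π : Equiv.Perm (Fin (k + 1)))
    (d : Fin (k + 1) → ℕ) (hd : ∀ j, d j < b)
    (c : Fin (k + 1) → ℕ) (hc0 : c 0 = 0) (hcb : ∀ j, c j ≤ n - 1)
    (hπ0 : c (π 0) = 0)
    (hrel₁ : ∀ j : Fin (k + 1), (b : ℤ) * c (j + 1) - c j = n * d (σ j) - d j)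
    (hrel₂ : ∀ j : Fin (k + 1),
      (b : ℤ) * c (π (j + 1)) - c (π j) = n * d (π (τ j)) - d (π j)) :
    ∀ j : Fin (k + 1),
      ((n : ℤ) * d (σ j)) ≡ (n : ℤ) * d ((π * τ * π⁻¹) j) [ZMOD b] :=
  stmt_15_general n b k σ τ π d c hrel₁ hrel₂
end

section
/- Suppose there exists a permutation α with (nP_{τ₂} − I)P_α d = (nP_{τ₁} − I)d. Then for any permutation π, (d_{π(k)},...,d_{π(0)})_b is an (n,b,π^{-1}τ₁π)-permutiple if and only if (d_{απ(k)},...,d_{απ(0)})_b is an (n,b,π^{-1}τ₂π)-permutiple; moreover both have the same carry vector. -/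
open Finset

lemma carry_div (b : ℕ) (hb : 0 < b) (n k : ℕ) (u : ℕ → ℕ) (c : ℕ → ℕ)
    (hc0 : c 0 = 0)
    (hrec : ∀ j < k + 1, c (j + 1) = (n * u j + c j) / b) :
    ∀ j ≤ k + 1, c j = (n * ∑ i ∈ range j, u i * b ^ i) / b ^ j := by
  intro j hj
  induction j with
  | zero => simpa using hc0
  | succ j ih =>
    have hj' : j < k + 1 := hj
    have hbj : 0 < b ^ j := pow_pos hb j
    rw [hrec j hj', ih (le_of_lt hj')]
    rw [Finset.sum_range_succ, Nat.mul_add, pow_succ, ← Nat.div_div_eq_div_mul]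
    congr 1
    have : n * (u j * b ^ j) = b ^ j * (n * u j) := by ring
    rw [this, Nat.add_mul_div_left _ _ hbj, Nat.add_comm]

lemma digit_sum_lt (b : ℕ) (hb : 0 < b) (s : ℕ → ℕ) :
    ∀ j, (∀ i < j, s i < b) → ∑ i ∈ range j, s i * b ^ i < b ^ j := by
  intro j
  induction j with
  | zero => simp
  | succ j ih =>
    intro hs
    have h1 : ∑ i ∈ range j, s i * b ^ i < b ^ j :=
      ih (fun i hi => hs i (Nat.lt_succ_of_lt hi))
    have h2 : s j * b ^ j ≤ (b - 1) * b ^ j :=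
      Nat.mul_le_mul_right _ (by have := hs j (Nat.lt_succ_self j); omega)
    have h3 : b ^ j + (b - 1) * b ^ j = b ^ (j + 1) := by
      have : b ^ j + (b - 1) * b ^ j = (1 + (b - 1)) * b ^ j := by ring
      rw [this, Nat.add_sub_cancel' hb, pow_succ, Nat.mul_comm]
    rw [Finset.sum_range_succ]
    omega

lemma carry_formula (n b k : ℕ) (hb : 0 < b) (u s : ℕ → ℕ)
    (hs : ∀ i < k + 1, s i < b)
    (total : ∑ i ∈ range (k + 1), s i * b ^ i
      = n * ∑ i ∈ range (k + 1), u i * b ^ i)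
    (c : ℕ → ℕ) (hc0 : c 0 = 0)
    (hrec : ∀ j < k + 1, c (j + 1) = (n * u j + c j) / b) :
    ∀ j ≤ k + 1, (c j : ℤ) =
      ∑ i ∈ Finset.Ico j (k + 1), ((s i : ℤ) - n * u i) * b ^ (i - j) := by
  intro j hj
  have hcj := carry_div b hb n k u c hc0 hrec j hj
  set T : ℕ := n * ∑ i ∈ range j, u i * b ^ i with hT
  set X : ℤ := ∑ i ∈ Finset.Ico j (k + 1), ((s i : ℤ) - n * u i) * b ^ (i - j)
    with hX
  have hbj : (0:ℤ) < (b:ℤ) ^ j := by positivity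
  -- key decomposition
  have h1 : (b:ℤ) ^ j * X
      = ∑ i ∈ Finset.Ico j (k + 1), ((s i : ℤ) - n * u i) * b ^ i := by
    rw [hX, Finset.mul_sum]
    refine Finset.sum_congr rfl fun i hi => ?_
    have hji : j ≤ i := (Finset.mem_Ico.mp hi).1
    rw [show (b:ℤ) ^ j * (((s i : ℤ) - n * u i) * b ^ (i - j))
        = ((s i : ℤ) - n * u i) * ((b:ℤ) ^ j * b ^ (i - j)) by ring,
      ← pow_add, Nat.add_sub_cancel' hji]
  have castTotal : ∑ i ∈ range (k + 1), (s i : ℤ) * b ^ i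
      = (n : ℤ) * ∑ i ∈ range (k + 1), (u i : ℤ) * b ^ i := by
    exact_mod_cast total
  have splitS : ∑ i ∈ range j, (s i : ℤ) * b ^ i
      + ∑ i ∈ Finset.Ico j (k + 1), (s i : ℤ) * b ^ i
      = ∑ i ∈ range (k + 1), (s i : ℤ) * b ^ i := by
    rw [Finset.range_eq_Ico, Finset.range_eq_Ico]
    exact Finset.sum_Ico_consecutive (fun i => (s i : ℤ) * b ^ i) (Nat.zero_le j) hj
  have splitU : ∑ i ∈ range j, (u i : ℤ) * b ^ i
      + ∑ i ∈ Finset.Ico j (k + 1), (u i : ℤ) * b ^ i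
      = ∑ i ∈ range (k + 1), (u i : ℤ) * b ^ i := by
    rw [Finset.range_eq_Ico, Finset.range_eq_Ico]
    exact Finset.sum_Ico_consecutive (fun i => (u i : ℤ) * b ^ i) (Nat.zero_le j) hj
  have hIco : ∑ i ∈ Finset.Ico j (k + 1), ((s i : ℤ) - n * u i) * b ^ i
      = ∑ i ∈ Finset.Ico j (k + 1), (s i : ℤ) * b ^ i
        - (n:ℤ) * ∑ i ∈ Finset.Ico j (k + 1), (u i : ℤ) * b ^ i := by
    rw [Finset.mul_sum, ← Finset.sum_sub_distrib]
    exact Finset.sum_congr rfl fun i _ => by ring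
  have hTcast : (T : ℤ) = (n : ℤ) * ∑ i ∈ range j, (u i : ℤ) * b ^ i := by
    rw [hT]; push_cast; ring
  have key : (T : ℤ) = ∑ i ∈ range j, (s i : ℤ) * b ^ i + (b:ℤ) ^ j * X := by
    rw [h1, hIco, hTcast]
    have e2' : (n:ℤ) * ∑ i ∈ range (k + 1), (u i : ℤ) * b ^ i
        = (n:ℤ) * ∑ i ∈ range j, (u i : ℤ) * b ^ i
          + (n:ℤ) * ∑ i ∈ Finset.Ico j (k + 1), (u i : ℤ) * b ^ i := by
      rw [← splitU, mul_add]
    linarith [castTotal, splitS, e2']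
  -- Euclidean division bounds
  have hdm : b ^ j * (T / b ^ j) + T % b ^ j = T := Nat.div_add_mod T (b ^ j)
  have hr : T % b ^ j < b ^ j := Nat.mod_lt _ (pow_pos hb j)
  have hSlt : ∑ i ∈ range j, s i * b ^ i < b ^ j :=
    digit_sum_lt b hb s j (fun i hi => hs i (lt_of_lt_of_le hi hj))
  have hScast : ((∑ i ∈ range j, s i * b ^ i : ℕ) : ℤ)
      = ∑ i ∈ range j, (s i : ℤ) * b ^ i := by push_cast; ring
  -- b^j * (c j - X) = Σs - r
  have heq : (b:ℤ) ^ j * ((c j : ℤ) - X)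
      = ((∑ i ∈ range j, s i * b ^ i : ℕ) : ℤ) - ((T % b ^ j : ℕ) : ℤ) := by
    have hdmZ : (b:ℤ) ^ j * (c j : ℤ) + ((T % b ^ j : ℕ) : ℤ) = (T : ℤ) := by
      rw [hcj]; exact_mod_cast hdm
    rw [hScast]
    linarith [key, hdmZ]
  have hdvd : ((b:ℤ) ^ j) ∣ (((∑ i ∈ range j, s i * b ^ i : ℕ) : ℤ)
      - ((T % b ^ j : ℕ) : ℤ)) := ⟨(c j : ℤ) - X, heq.symm⟩
  have habs : |((∑ i ∈ range j, s i * b ^ i : ℕ) : ℤ)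
      - ((T % b ^ j : ℕ) : ℤ)| < (b:ℤ) ^ j := by
    rw [abs_lt]
    constructor
    · have : ((T % b ^ j : ℕ) : ℤ) < (b:ℤ) ^ j := by exact_mod_cast hr
      have h0 : (0:ℤ) ≤ ((∑ i ∈ range j, s i * b ^ i : ℕ) : ℤ) := Int.ofNat_nonneg _
      linarith
    · have : ((∑ i ∈ range j, s i * b ^ i : ℕ) : ℤ) < (b:ℤ) ^ j := by
        exact_mod_cast hSlt
      have h0 : (0:ℤ) ≤ ((T % b ^ j : ℕ) : ℤ) := Int.ofNat_nonneg _
      linarith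
  have hzero := Int.eq_zero_of_abs_lt_dvd hdvd habs
  rw [hzero] at heq
  have : (c j : ℤ) - X = 0 := by
    rcases mul_eq_zero.mp heq with h | h
    · exact absurd h (by positivity)
    · exact h
  linarith

/-- Theorem (bijection): if there exists a permutation α with
(nP_{τ₂} − I)P_α d = (nP_{τ₁} − I)d, then for any permutation π,
(d_{π(k)},...,d_{π(0)})_b is an (n,b,π⁻¹τ₁π)-permutiple iff
(d_{απ(k)},...,d_{απ(0)})_b is an (n,b,π⁻¹τ₂π)-permutiple; moreover both have
the same carry vector (the carries being produced by the multiplication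
algorithm). -/
theorem stmt_16 (n b k : ℕ) (hn : 1 < n) (hnb : n < b)
    (τ₁ τ₂ α : Equiv.Perm (Fin (k + 1)))
    (d : Fin (k + 1) → ℕ) (hd : ∀ j, d j < b)
    (hα : ∀ j : Fin (k + 1),
      (n : ℤ) * d (α (τ₂ j)) - d (α j) = (n : ℤ) * d (τ₁ j) - d j) :
    ∀ π : Equiv.Perm (Fin (k + 1)),
      ((∑ j : Fin (k + 1), d (π j) * b ^ (j : ℕ)
          = n * ∑ j : Fin (k + 1), d (π ((π⁻¹ * τ₁ * π) j)) * b ^ (j : ℕ))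
        ↔ (∑ j : Fin (k + 1), d (α (π j)) * b ^ (j : ℕ)
          = n * ∑ j : Fin (k + 1), d (α (π ((π⁻¹ * τ₂ * π) j))) * b ^ (j : ℕ)))
      ∧ ((∑ j : Fin (k + 1), d (π j) * b ^ (j : ℕ)
          = n * ∑ j : Fin (k + 1), d (π ((π⁻¹ * τ₁ * π) j)) * b ^ (j : ℕ)) →
        ∀ c c' : ℕ → ℕ, c 0 = 0 → c' 0 = 0 →
          (∀ j : Fin (k + 1),
            c ((j : ℕ) + 1) = (n * d (π ((π⁻¹ * τ₁ * π) j)) + c (j : ℕ)) / b) →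
          (∀ j : Fin (k + 1),
            c' ((j : ℕ) + 1) = (n * d (α (π ((π⁻¹ * τ₂ * π) j))) + c' (j : ℕ)) / b) →
          ∀ j : ℕ, j ≤ k + 1 → c j = c' j) := by
  intro π
  have hb : 0 < b := lt_trans (lt_trans Nat.zero_lt_one hn) hnb
  have hre1 : ∀ j : Fin (k + 1), π ((π⁻¹ * τ₁ * π) j) = τ₁ (π j) := by
    intro j; simp [Equiv.Perm.mul_apply]
  have hre2 : ∀ j : Fin (k + 1), π ((π⁻¹ * τ₂ * π) j) = τ₂ (π j) := by
    intro j; simp [Equiv.Perm.mul_apply]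
  -- natural-number digit functions
  set s1 : ℕ → ℕ := fun i => if h : i < k + 1 then d (π ⟨i, h⟩) else 0 with hs1def
  set u1 : ℕ → ℕ := fun i => if h : i < k + 1 then d (τ₁ (π ⟨i, h⟩)) else 0 with hu1def
  set s2 : ℕ → ℕ := fun i => if h : i < k + 1 then d (α (π ⟨i, h⟩)) else 0 with hs2def
  set u2 : ℕ → ℕ := fun i => if h : i < k + 1 then d (α (τ₂ (π ⟨i, h⟩))) else 0 with hu2def
  have eS1 : ∑ j : Fin (k + 1), d (π j) * b ^ (j : ℕ)
      = ∑ i ∈ Finset.range (k + 1), s1 i * b ^ i := by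
    rw [← Fin.sum_univ_eq_sum_range (fun i => s1 i * b ^ i)]
    exact Finset.sum_congr rfl fun j _ => by simp [hs1def, j.isLt, not_lt.mpr (Fin.is_le j)]
  have eU1 : ∑ j : Fin (k + 1), d (π ((π⁻¹ * τ₁ * π) j)) * b ^ (j : ℕ)
      = ∑ i ∈ Finset.range (k + 1), u1 i * b ^ i := by
    rw [← Fin.sum_univ_eq_sum_range (fun i => u1 i * b ^ i)]
    exact Finset.sum_congr rfl fun j _ => by simp [hu1def, hre1 j, j.isLt, not_lt.mpr (Fin.is_le j)]
  have eS2 : ∑ j : Fin (k + 1), d (α (π j)) * b ^ (j : ℕ)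
      = ∑ i ∈ Finset.range (k + 1), s2 i * b ^ i := by
    rw [← Fin.sum_univ_eq_sum_range (fun i => s2 i * b ^ i)]
    exact Finset.sum_congr rfl fun j _ => by simp [hs2def, j.isLt, not_lt.mpr (Fin.is_le j)]
  have eU2 : ∑ j : Fin (k + 1), d (α (π ((π⁻¹ * τ₂ * π) j))) * b ^ (j : ℕ)
      = ∑ i ∈ Finset.range (k + 1), u2 i * b ^ i := by
    rw [← Fin.sum_univ_eq_sum_range (fun i => u2 i * b ^ i)]
    exact Finset.sum_congr rfl fun j _ => by simp [hu2def, hre2 j, j.isLt, not_lt.mpr (Fin.is_le j)]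
  -- the ℤ identity between the two "defects"
  have hZ : (∑ i ∈ Finset.range (k + 1), (s1 i : ℤ) * b ^ i)
        - n * ∑ i ∈ Finset.range (k + 1), (u1 i : ℤ) * b ^ i
      = (∑ i ∈ Finset.range (k + 1), (s2 i : ℤ) * b ^ i)
        - n * ∑ i ∈ Finset.range (k + 1), (u2 i : ℤ) * b ^ i := by
    rw [Finset.mul_sum, Finset.mul_sum, ← Finset.sum_sub_distrib,
      ← Finset.sum_sub_distrib]
    refine Finset.sum_congr rfl fun i hi => ?_
    have hik : i < k + 1 := Finset.mem_range.mp hi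
    have h := hα (π ⟨i, hik⟩)
    simp only [hs1def, hu1def, hs2def, hu2def, dif_pos hik]
    linear_combination ((b:ℤ)^i) * h
  have hiff : (∑ j : Fin (k + 1), d (π j) * b ^ (j : ℕ)
        = n * ∑ j : Fin (k + 1), d (π ((π⁻¹ * τ₁ * π) j)) * b ^ (j : ℕ))
      ↔ (∑ j : Fin (k + 1), d (α (π j)) * b ^ (j : ℕ)
        = n * ∑ j : Fin (k + 1), d (α (π ((π⁻¹ * τ₂ * π) j))) * b ^ (j : ℕ)) := by
    rw [eS1, eU1, eS2, eU2]
    constructor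
    · intro h
      have hZ1 : (∑ i ∈ Finset.range (k + 1), (s1 i : ℤ) * b ^ i)
          = n * ∑ i ∈ Finset.range (k + 1), (u1 i : ℤ) * b ^ i := by
        exact_mod_cast h
      have : (∑ i ∈ Finset.range (k + 1), (s2 i : ℤ) * b ^ i)
          = n * ∑ i ∈ Finset.range (k + 1), (u2 i : ℤ) * b ^ i := by linarith
      exact_mod_cast this
    · intro h
      have hZ2 : (∑ i ∈ Finset.range (k + 1), (s2 i : ℤ) * b ^ i)
          = n * ∑ i ∈ Finset.range (k + 1), (u2 i : ℤ) * b ^ i := by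
        exact_mod_cast h
      have : (∑ i ∈ Finset.range (k + 1), (s1 i : ℤ) * b ^ i)
          = n * ∑ i ∈ Finset.range (k + 1), (u1 i : ℤ) * b ^ i := by linarith
      exact_mod_cast this
  refine ⟨hiff, ?_⟩
  intro hS c c' hc0 hc0' hrc hrc' j hj
  have hS' := hiff.mp hS
  have total1 : ∑ i ∈ Finset.range (k + 1), s1 i * b ^ i
      = n * ∑ i ∈ Finset.range (k + 1), u1 i * b ^ i := by
    rw [← eS1, ← eU1]; exact hS
  have total2 : ∑ i ∈ Finset.range (k + 1), s2 i * b ^ i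
      = n * ∑ i ∈ Finset.range (k + 1), u2 i * b ^ i := by
    rw [← eS2, ← eU2]; exact hS'
  have hrec1 : ∀ i < k + 1, c (i + 1) = (n * u1 i + c i) / b := by
    intro i hi
    have := hrc ⟨i, hi⟩
    simpa [hu1def, dif_pos hi, (by omega : i ≤ k)] using this
  have hrec2 : ∀ i < k + 1, c' (i + 1) = (n * u2 i + c' i) / b := by
    intro i hi
    have := hrc' ⟨i, hi⟩
    simpa [hu2def, dif_pos hi, (by omega : i ≤ k)] using this
  have hsb1 : ∀ i < k + 1, s1 i < b := by
    intro i hi; simp [hs1def, dif_pos hi, (by omega : i ≤ k), hd]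
  have hsb2 : ∀ i < k + 1, s2 i < b := by
    intro i hi; simp [hs2def, dif_pos hi, (by omega : i ≤ k), hd]
  have f1 := carry_formula n b k hb u1 s1 hsb1 total1 c hc0 hrec1 j hj
  have f2 := carry_formula n b k hb u2 s2 hsb2 total2 c' hc0' hrec2 j hj
  have feq : (c j : ℤ) = (c' j : ℤ) := by
    rw [f1, f2]
    refine Finset.sum_congr rfl fun i hi => ?_
    have hik : i < k + 1 := (Finset.mem_Ico.mp hi).2
    have h := hα (π ⟨i, hik⟩)
    simp only [hs1def, hu1def, hs2def, hu2def, dif_pos hik]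
    linear_combination ((b:ℤ)^(i-j)) * h
  exact_mod_cast feq
end

section
/- Let (d_k,...,d_0)_b be an (n,b,σ)-permutiple with carries c, and (d_{π(k)},...,d_{π(0)})_b an (n,b,τ)-permutiple with carries ĉ. If n divides b, then ĉ_j = c_{π(j)} for all 0 ≤ j ≤ k. -/
/-- Theorem (n_div_b): let (d_k,...,d_0)_b be an (n,b,σ)-permutiple with carries
c, and (d_{π(k)},...,d_{π(0)})_b an (n,b,τ)-permutiple with carries c'. If n
divides b, then c'_j = c_{π(j)} for all j. -/
theorem stmt_17 (n b k : ℕ) (hn : 1 < n) (hnb : n < b) (hdvd : n ∣ b)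
    (σ τ π : Equiv.Perm (Fin (k + 1)))
    (d : Fin (k + 1) → ℕ) (hd : ∀ j, d j < b)
    (c c' : Fin (k + 1) → ℕ)
    (hc0 : c 0 = 0) (hcb : ∀ j, c j ≤ n - 1)
    (hc'0 : c' 0 = 0) (hc'b : ∀ j, c' j ≤ n - 1)
    (hrel₁ : ∀ j : Fin (k + 1), (b : ℤ) * c (j + 1) - c j = n * d (σ j) - d j)
    (hrel₂ : ∀ j : Fin (k + 1),
      (b : ℤ) * c' (j + 1) - c' j = n * d (π (τ j)) - d (π j)) :
    ∀ j : Fin (k + 1), c' j = c (π j) := by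
  obtain ⟨m, hm⟩ := hdvd
  have hn0 : (0:ℤ) < n := by exact_mod_cast Nat.zero_lt_of_lt hn
  have h1 : ∀ j, ((c j : ℤ)) % n = (d j : ℤ) % n := by
    intro j
    have h := hrel₁ j
    have hdv : (n:ℤ) ∣ ((d j : ℤ) - c j) := by
      refine ⟨(d (σ j) : ℤ) - m * c (j+1), ?_⟩
      have hb : (b : ℤ) = n * m := by exact_mod_cast hm
      rw [hb] at h; linear_combination h
    exact Int.modEq_iff_dvd.mpr hdv
  have h2 : ∀ j, ((c' j : ℤ)) % n = (d (π j) : ℤ) % n := by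
    intro j
    have h := hrel₂ j
    have hdv : (n:ℤ) ∣ ((d (π j) : ℤ) - c' j) := by
      refine ⟨(d (π (τ j)) : ℤ) - m * c' (j+1), ?_⟩
      have hb : (b : ℤ) = n * m := by exact_mod_cast hm
      rw [hb] at h; linear_combination h
    exact Int.modEq_iff_dvd.mpr hdv
  intro j
  have hlt1 : c (π j) < n := by have := hcb (π j); omega
  have hlt2 : c' j < n := by have := hc'b j; omega
  have e1 : ((c (π j) : ℤ)) % n = c (π j) :=
    Int.emod_eq_of_lt (by positivity) (by exact_mod_cast hlt1)
  have e2 : ((c' j : ℤ)) % n = c' j :=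
    Int.emod_eq_of_lt (by positivity) (by exact_mod_cast hlt2)
  have : ((c' j : ℤ)) = c (π j) := by
    rw [← e1, ← e2, h2 j, h1 (π j)]
  exact_mod_cast this
end
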